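/- Suppose n ≥ 3, δ ≥ 1, n ≥ 3δ, and there is a Hadamard matrix of order h = n + δ. Then D(n)/n^(n/2) ≥ (4/(ne))^(δ/2), where D(n) is the maximal determinant of an n×n ±1-matrix. -/

import Mathlib

/-!
Split a Hadamard matrix `H` of order `h = n + δ` into blocks so that its `δ × δ` corner `E` is
nonsingular (possible after permuting columns, since the rows of `H` are independent). Jacobi's
complementary-minor identity, with `H⁻¹ = Hᵀ / h` and `|det H| = h ^ (h / 2)`, gives the
complementary `n × n` block `A` the determinant `|det A| = h ^ (h / 2 - δ) |det E|`, and
`|det E| ≥ 1` as `det E` is a nonzero integer. It remains to show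
`(4 / (n e)) ^ (δ / 2) ≤ h ^ (h / 2 - δ) / n ^ (n / 2)`, which follows from
`(n + δ) ^ (n + δ) / n ^ n ≥ (n e) ^ δ` and `n e / (n + δ) ^ 2 ≥ 4 / (n e)`; the latter holds
because `δ / n ≤ 1 / 3 ≤ e / 2 - 1`.
-/

open Matrix Real

namespace Matrix

variable {ι α β K : Type*} [Fintype ι] [Fintype α] [Fintype β]

theorem one_le_abs_det_of_forall_mem_range_intCast [DecidableEq ι] {A : Matrix ι ι ℝ}
    (hA : ∀ i j, A i j ∈ Set.range ((↑) : ℤ → ℝ)) (hdet : A.det ≠ 0) : 1 ≤ |A.det| := by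
  choose Z hZ using hA
  have hdetZ : ((of Z).det : ℝ) = A.det := by
    rw [← eq_intCast (Int.castRingHom ℝ), RingHom.map_det]
    congr 1
    ext i j
    exact hZ i j
  rw [← hdetZ] at hdet ⊢
  exact_mod_cast Int.one_le_abs (by exact_mod_cast hdet)

theorem exists_injective_det_submatrix_ne_zero [DecidableEq β] [Field K] {R : Matrix β ι K}
    (hR : LinearIndependent K R) : ∃ c : β → ι, c.Injective ∧ (R.submatrix id c).det ≠ 0 := by
  have hspan : Submodule.span K (Set.range R.col) = ⊤ := by
    apply Submodule.eq_top_of_finrank_eq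
    rw [← rank_eq_finrank_span_cols, hR.rank_matrix, Module.finrank_fintype_fun_eq_card]
  obtain ⟨κ, a, ha, haspan, hali⟩ := exists_linearIndependent' K R.col
  have : Fintype κ := Fintype.ofInjective a ha
  let b : Module.Basis κ K (β → K) := .mk hali (by rw [haspan, hspan])
  let e : β ≃ κ := Fintype.equivOfCardEq (by
    rw [← Module.finrank_eq_card_basis b, Module.finrank_fintype_fun_eq_card])
  refine ⟨a ∘ e, ha.comp e.injective, ?_⟩
  have hcols : LinearIndependent K (R.submatrix id (a ∘ e))ᵀ := hali.comp e e.injective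
  exact ((isUnit_iff_isUnit_det _).mp (linearIndependent_cols_iff_isUnit.mp hcols)).ne_zero

theorem _root_.Function.Injective.exists_sumEquiv_apply_inr {c : β → ι} (hc : c.Injective)
    (hcard : Fintype.card ι = Fintype.card α + Fintype.card β) :
    ∃ e : α ⊕ β ≃ ι, ∀ j, e (.inr j) = c j := by
  classical
  have : Fintype.card α = Fintype.card ((Set.range c)ᶜ : Set ι) := by
    rw [Fintype.card_compl_set, Set.card_range_of_injective hc]
    omega
  refine ⟨(Equiv.sumCongr (Fintype.equivOfCardEq this) (Equiv.ofInjective c hc)).trans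
    ((Equiv.sumComm _ _).trans (Equiv.Set.sumCompl _)), fun j => ?_⟩
  simp

variable [DecidableEq α] [DecidableEq β]

theorem det_toBlocks₁₁_eq_det_mul_det_toBlocks₂₂ [CommRing K] {M N : Matrix (α ⊕ β) (α ⊕ β) K}
    (hMN : M * N = 1) : M.toBlocks₁₁.det = M.det * N.toBlocks₂₂.det := by
  have hblock : M * fromBlocks 1 N.toBlocks₁₂ 0 N.toBlocks₂₂ =
      fromBlocks M.toBlocks₁₁ 0 M.toBlocks₂₁ 1 := by
    rw [← fromBlocks_toBlocks M, ← fromBlocks_toBlocks N, fromBlocks_multiply, ← fromBlocks_one,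
      fromBlocks_inj] at hMN
    rw [← fromBlocks_toBlocks M, fromBlocks_multiply]
    simp_all
  simpa [det_fromBlocks_zero₂₁, det_fromBlocks_zero₁₂] using (congrArg det hblock).symm

theorem IsHadamard.abs_det [DecidableEq ι] {H : Matrix ι ι ℝ} (hH : H.IsHadamard) :
    |H.det| = (Fintype.card ι : ℝ) ^ ((Fintype.card ι : ℝ) / 2) := by
  have hsq : H.det * H.det = (Fintype.card ι : ℝ) ^ Fintype.card ι := by
    simpa using hH.det_mul_star_det
  rw [← sqrt_sq_eq_abs, sq, hsq, sqrt_eq_rpow, ← rpow_natCast, ← rpow_mul (by positivity)]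
  ring_nf

theorem IsHadamard.rpow_le_abs_det_toBlocks₁₁ [Nonempty β] {M : Matrix (α ⊕ β) (α ⊕ β) ℝ}
    (hM : M.IsHadamard) (h₂₂ : M.toBlocks₂₂.det ≠ 0) :
    (Fintype.card (α ⊕ β) : ℝ) ^ ((Fintype.card (α ⊕ β) : ℝ) / 2 - Fintype.card β)
      ≤ |M.toBlocks₁₁.det| := by
  set h : ℝ := (Fintype.card (α ⊕ β) : ℝ)
  have hh : 0 < h := by positivity
  have hMN : M * (h⁻¹ • Mᵀ) = 1 := by
    rw [mul_smul_comm, ← conjTranspose_eq_transpose_of_trivial, hM.mul_conjTranspose, smul_smul,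
      inv_mul_cancel₀ hh.ne', one_smul]
  have hN₂₂ : (h⁻¹ • Mᵀ).toBlocks₂₂.det = h ^ (-(Fintype.card β : ℝ)) * M.toBlocks₂₂.det := by
    rw [show (h⁻¹ • Mᵀ).toBlocks₂₂ = h⁻¹ • M.toBlocks₂₂ᵀ from rfl, det_smul, det_transpose,
      inv_pow, rpow_neg hh.le, rpow_natCast]
  rw [det_toBlocks₁₁_eq_det_mul_det_toBlocks₂₂ hMN, hN₂₂, abs_mul, abs_mul, hM.abs_det,
    abs_of_pos (rpow_pos_of_pos hh _), sub_eq_add_neg, rpow_add hh]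
  refine mul_le_mul_of_nonneg_left (le_mul_of_one_le_right (by positivity)
    (one_le_abs_det_of_forall_mem_range_intCast (fun i j => ?_) h₂₂)) (by positivity)
  rcases Unitary.mem_iff_eq_one_or_eq_neg_one.mp (hM.apply_mem (.inr i) (.inr j)) with hij | hij
  exacts [⟨1, by simp [toBlocks₂₂, hij]⟩, ⟨-1, by simp [toBlocks₂₂, hij]⟩]

theorem IsHadamard.exists_rpow_le_abs_det_submatrix [DecidableEq ι] [Nonempty β]
    {H : Matrix ι ι ℝ} (hH : H.IsHadamard)
    (hcard : Fintype.card ι = Fintype.card α + Fintype.card β) :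
    ∃ r c : α → ι,
      (Fintype.card ι : ℝ) ^ ((Fintype.card ι : ℝ) / 2 - Fintype.card β)
        ≤ |(H.submatrix r c).det| := by
  obtain ⟨er⟩ : Nonempty (α ⊕ β ≃ ι) := Fintype.card_eq.mp (by rw [Fintype.card_sum, hcard])
  have : Nonempty ι := ⟨er (.inr (Classical.arbitrary β))⟩
  have hrows : LinearIndependent ℝ (fun j : β => H (er (.inr j))) :=
    (linearIndependent_rows_iff_isUnit.mpr ((isUnit_iff_isUnit_det H).mpr
      (hH.det_ne_zero (by positivity)).isUnit)).comp _ (er.injective.comp Sum.inr_injective)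
  obtain ⟨c, hc, hdet⟩ := exists_injective_det_submatrix_ne_zero hrows
  obtain ⟨ec, hec⟩ := hc.exists_sumEquiv_apply_inr (α := α) hcard
  have hM : (H.submatrix er ec).IsHadamard := (isHadamard_submatrix_equiv_iff er ec).mpr hH
  have h₂₂ : (H.submatrix er ec).toBlocks₂₂ = (of fun j => H (er (.inr j))).submatrix id c := by
    ext i j
    simp [toBlocks₂₂, hec]
  refine ⟨er ∘ .inl, ec ∘ .inl, ?_⟩
  rw [Fintype.card_congr er.symm]
  exact hM.rpow_le_abs_det_toBlocks₁₁ (h₂₂ ▸ hdet)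

end Matrix

section Analytic

variable {N d : ℝ}

theorem mul_log_add_one_le_mul_log_add_sub (hN : 0 < N) (hd : 0 ≤ d) :
    d * (log N + 1) ≤ (N + d) * log (N + d) - N * log N := by
  have hNd : 0 < N + d := by linarith
  have h := one_sub_inv_le_log_of_pos (div_pos hNd hN)
  rw [inv_div, log_div hNd.ne' hN.ne', one_sub_div hNd.ne', add_sub_cancel_left,
    div_le_iff₀ hNd] at h
  linarith

theorem four_div_mul_exp_le (hN : 0 < N) (hd : 0 ≤ d) (hdN : 3 * d ≤ N) :
    4 / (N * exp 1) ≤ N * exp 1 / (N + d) ^ 2 := by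
  have he : 8 / 3 < exp 1 := lt_trans (by norm_num) exp_one_gt_d9
  have h : 2 * (N + d) ≤ N * exp 1 := by nlinarith
  rw [div_le_div_iff₀ (by positivity) (by positivity)]
  nlinarith

theorem four_div_mul_exp_rpow_le (hN : 0 < N) (hd : 0 ≤ d) (hdN : 3 * d ≤ N) :
    (4 / (N * exp 1)) ^ (d / 2) ≤ (N + d) ^ ((N + d) / 2 - d) / N ^ (N / 2) := by
  have hNd : 0 < N + d := by linarith
  have hsq := log_le_log (by positivity) (four_div_mul_exp_le hN hd hdN)
  rw [log_div (by positivity) (by positivity), log_div (by positivity) (by positivity),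
    log_mul hN.ne' (exp_pos 1).ne', log_exp, log_pow] at hsq
  have hent := mul_log_add_one_le_mul_log_add_sub hN hd
  rw [← log_le_log_iff (by positivity) (by positivity), log_rpow (by positivity),
    log_div (by positivity) (by positivity), log_div (by positivity) (by positivity),
    log_rpow hNd, log_rpow hN, log_mul hN.ne' (exp_pos 1).ne', log_exp]
  linarith [mul_le_mul_of_nonneg_left hsq (by linarith : 0 ≤ d / 2)]

end Analytic

theorem stmt_19_general (n δ : ℕ) (hδ : 1 ≤ δ) (hnδ : 3 * δ ≤ n)
    (hHad : ∃ H : Matrix (Fin (n + δ)) (Fin (n + δ)) ℝ,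
      (∀ i j, H i j = 1 ∨ H i j = -1) ∧
      H * H.transpose = ((n + δ : ℕ) : ℝ) • 1)
    (D : ℝ)
    (hD : IsGreatest {x : ℝ | ∃ A : Matrix (Fin n) (Fin n) ℝ,
      (∀ i j, A i j = 1 ∨ A i j = -1) ∧ x = |A.det|} D) :
    (4 / ((n : ℝ) * Real.exp 1)) ^ ((δ : ℝ) / 2) ≤ D / (n : ℝ) ^ ((n : ℝ) / 2) := by
  obtain ⟨H, hsign, hHHt⟩ := hHad
  have hH : H.IsHadamard := by
    have hh : (Fintype.card (Fin (n + δ)) : ℝ) ≠ 0 := by rw [Fintype.card_fin]; positivity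
    refine (isHadamard_iff_mul_conjTranspose (.of_ne_zero hh)).mpr
      ⟨fun i j => Unitary.mem_iff_eq_one_or_eq_neg_one.mpr (hsign i j), ?_⟩
    simpa [conjTranspose_eq_transpose_of_trivial] using hHHt
  have : Nonempty (Fin δ) := Fin.pos_iff_nonempty.mp hδ
  obtain ⟨r, c, hrc⟩ := hH.exists_rpow_le_abs_det_submatrix (α := Fin n) (β := Fin δ) (by simp)
  have hlower : ((n : ℝ) + δ) ^ (((n : ℝ) + δ) / 2 - δ) ≤ D := by
    simpa using hrc.trans (hD.2 ⟨_, fun i j => hsign _ _, rfl⟩)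
  have hn : (0 : ℝ) < n := by exact_mod_cast (show 0 < n by omega)
  exact (four_div_mul_exp_rpow_le hn δ.cast_nonneg (by exact_mod_cast hnδ)).trans
    (div_le_div_of_nonneg_right hlower (by positivity))

theorem stmt_19 (n δ : ℕ) (hn : 3 ≤ n) (hδ : 1 ≤ δ) (hnδ : 3 * δ ≤ n)
    (hHad : ∃ H : Matrix (Fin (n + δ)) (Fin (n + δ)) ℝ,
      (∀ i j, H i j = 1 ∨ H i j = -1) ∧
      H * H.transpose = ((n + δ : ℕ) : ℝ) • 1)
    (D : ℝ)
    (hD : IsGreatest {x : ℝ | ∃ A : Matrix (Fin n) (Fin n) ℝ,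
      (∀ i j, A i j = 1 ∨ A i j = -1) ∧ x = |A.det|} D) :
    (4 / ((n : ℝ) * Real.exp 1)) ^ ((δ : ℝ) / 2) ≤ D / (n : ℝ) ^ ((n : ℝ) / 2) :=
  stmt_19_general n δ hδ hnδ hHad D hD
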